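/- arXiv:1710.00542 — 4 statements merged into one kernel-verified Lean document; each statement's English description precedes it below -/
import Mathlib

section
/- For positive integers N1, N2 and any integer k with 0 ≤ k ≤ N2(N1+1) − 1, there exist elements p, q of S_N = {1,...,N1} ∪ {n(N1+1) : n=1,...,N2} with k = p − q. -/
/-- Every integer `k` with `0 ≤ k ≤ N2(N1+1) - 1` is a difference of two elements of
the nested array `S_N = {1,…,N1} ∪ {n(N1+1) : 1 ≤ n ≤ N2}`. -/
theorem stmt_1 (N1 N2 : ℤ) (h1 : 1 ≤ N1) (h2 : 1 ≤ N2) (k : ℤ)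
    (hk0 : 0 ≤ k) (hk1 : k ≤ N2 * (N1 + 1) - 1) :
    let S : Set ℤ := {x | 1 ≤ x ∧ x ≤ N1} ∪ {x | ∃ n : ℤ, 1 ≤ n ∧ n ≤ N2 ∧ x = n * (N1 + 1)}
    ∃ p ∈ S, ∃ q ∈ S, k = p - q := by
  intro S
  set a := k / (N1 + 1) with ha
  set b := k % (N1 + 1) with hb
  have hpos : (0:ℤ) < N1 + 1 := by linarith
  have hkab : (N1 + 1) * a + b = k := Int.mul_ediv_add_emod k (N1 + 1)
  have hb0 : 0 ≤ b := Int.emod_nonneg k (by linarith)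
  have hbN : b < N1 + 1 := Int.emod_lt_of_pos k hpos
  have ha0 : 0 ≤ a := Int.ediv_nonneg hk0 (by linarith)
  have haN : a + 1 ≤ N2 := by nlinarith
  have hp : ((a + 1) * (N1 + 1)) ∈ S := by
    right; exact ⟨a + 1, by linarith, haN, rfl⟩
  rcases eq_or_lt_of_le hb0 with h | h
  · exact ⟨(a + 1) * (N1 + 1), hp, N1 + 1, Or.inr ⟨1, le_refl 1, h2, by ring⟩,
      by nlinarith⟩
  · exact ⟨(a + 1) * (N1 + 1), hp, N1 + 1 - b, Or.inl ⟨by linarith, by linarith⟩,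
      by nlinarith⟩
end

section
/- Let P ≥ 2 be an integer with prime factorization P = ∏_{i=1}^{ω} p_i^{q_i}, and let Ω = ∑ q_i be the number of prime factors counted with multiplicity. Then the minimum of ∑_{i=1}^{K} Z_i − K + 1 over all K ≥ 1 and integers Z_1,...,Z_K ≥ 2 with ∏ Z_i = P is achieved at K = Ω with the Z_i equal to the prime factors of P (with multiplicity), and the minimal value equals 1 + ∑_{i=1}^{ω} (p_i − 1)·q_i. -/
private def Sfun (n : ℕ) : ℕ := (n.primeFactorsList.map (fun p => p - 1)).sum

private lemma aux_sum_pred (F : List ℕ) (hF : ∀ p ∈ F, 1 ≤ p) :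
    (F.map (fun p => p - 1)).sum + F.length = F.sum := by
  induction F with
  | nil => simp
  | cons a T ih =>
    have h1 : 1 ≤ a := hF a (by simp)
    have := ih (fun p hp => hF p (by simp [hp]))
    simp only [List.map_cons, List.sum_cons, List.length_cons]
    omega

private lemma aux_prod_ge (F : List ℕ) (hF : ∀ p ∈ F, 1 ≤ p) :
    1 + (F.map (fun p => p - 1)).sum ≤ F.prod := by
  induction F with
  | nil => simp
  | cons a T ih =>
    have h1 : 1 ≤ a := hF a (by simp)
    have hT := ih (fun p hp => hF p (by simp [hp]))
    simp only [List.map_cons, List.sum_cons, List.prod_cons]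
    have hTp : 1 ≤ T.prod := le_trans (by omega) hT
    calc 1 + (a - 1 + (T.map (fun p => p - 1)).sum)
        = (a - 1) + (1 + (T.map (fun p => p - 1)).sum) := by omega
      _ ≤ (a - 1) + T.prod := by omega
      _ ≤ (a - 1) * T.prod + T.prod := by nlinarith
      _ = a * T.prod := by
          have hx : T.prod ≤ a * T.prod := Nat.le_mul_of_pos_left T.prod (by omega)
          rw [Nat.sub_one_mul]
          omega

private lemma aux_S_le (z : ℕ) (hz : 1 ≤ z) : Sfun z + 1 ≤ z := by
  have hF : ∀ p ∈ z.primeFactorsList, 1 ≤ p := fun p hp =>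
    (Nat.prime_of_mem_primeFactorsList hp).one_lt.le
  have := aux_prod_ge z.primeFactorsList hF
  rw [Nat.prod_primeFactorsList (by omega)] at this
  unfold Sfun; omega

private lemma aux_S_mul (a b : ℕ) (ha : a ≠ 0) (hb : b ≠ 0) :
    Sfun (a * b) = Sfun a + Sfun b := by
  unfold Sfun
  have h := (Nat.perm_primeFactorsList_mul ha hb).map (fun p => p - 1)
  rw [h.sum_eq, List.map_append, List.sum_append]

private lemma aux_key (L : List ℕ) (hL : ∀ z ∈ L, 2 ≤ z) :
    Sfun L.prod + L.length ≤ L.sum := by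
  induction L with
  | nil => simp [Sfun]
  | cons a T ih =>
    have ha : 2 ≤ a := hL a (by simp)
    have hT : ∀ z ∈ T, 2 ≤ z := fun z hz => hL z (by simp [hz])
    have hTp : T.prod ≠ 0 := by
      intro h
      have := hT 0 (List.prod_eq_zero_iff.mp h); omega
    have := ih hT
    have h1 := aux_S_le a (by omega)
    simp only [List.prod_cons, List.sum_cons, List.length_cons]
    rw [aux_S_mul a T.prod (by omega) hTp]
    omega

/-- For `P ≥ 2`, the minimum of `(∑ Z_i) - K + 1` over all nonempty lists `Z_1,…,Z_K`
of integers `≥ 2` with product `P` is achieved by the list of prime factors of `P`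
(with multiplicity, so `K = Ω(P)`), and the minimal value equals
`1 + ∑ (p - 1)` over the prime factors of `P` counted with multiplicity. -/
theorem stmt_11 (P : ℕ) (hP : 2 ≤ P) :
    -- lower bound for every admissible factorization
    (∀ L : List ℕ, L ≠ [] → (∀ z ∈ L, 2 ≤ z) → L.prod = P →
      1 + ((P.primeFactorsList.map (fun p => p - 1)).sum) ≤ L.sum - L.length + 1) ∧
    -- the list of prime factors is admissible and attains the value
    (P.primeFactorsList ≠ [] ∧ (∀ z ∈ P.primeFactorsList, 2 ≤ z) ∧
      P.primeFactorsList.prod = P ∧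
      P.primeFactorsList.sum - P.primeFactorsList.length + 1
        = 1 + ((P.primeFactorsList.map (fun p => p - 1)).sum)) := by
  have hF2 : ∀ p ∈ P.primeFactorsList, 2 ≤ p := fun p hp =>
    (Nat.prime_of_mem_primeFactorsList hp).two_le
  have hsum := aux_sum_pred P.primeFactorsList (fun p hp => le_trans one_le_two (hF2 p hp))
  constructor
  · intro L _ hL hprod
    have := aux_key L hL
    rw [hprod] at this
    unfold Sfun at this
    omega
  · refine ⟨?_, hF2, Nat.prod_primeFactorsList (by omega), by omega⟩
    intro h
    have := Nat.prod_primeFactorsList (n := P) (by omega)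
    rw [h] at this
    simp at this
    omega
end

section
/- Let N1 < N2 be coprime positive integers and let S_CP = {n1·N2 : 0 ≤ n1 ≤ 2N1 − 1} ∪ {n2·N1 : 0 ≤ n2 ≤ N2 − 1}. Then the difference set {p − q : p, q ∈ S_CP} contains all 2·N1·N2 + 1 contiguous integers from −N1·N2 to N1·N2. -/
lemma stmt_14_aux (N1 N2 : ℤ) (h1 : 1 ≤ N1) (hlt : N1 < N2) (hcop : IsCoprime N1 N2)
    (k : ℤ) (hk0 : 0 ≤ k) (hk1 : k ≤ N1 * N2) :
    ∃ n1 n2 : ℤ, 0 ≤ n1 ∧ n1 ≤ 2 * N1 - 1 ∧ 0 ≤ n2 ∧ n2 ≤ N2 - 1 ∧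
      k = n1 * N2 - n2 * N1 := by
  obtain ⟨a, b, hab⟩ := hcop
  have hN1 : (0:ℤ) < N1 := h1
  set m : ℤ := (k * b) % N1 with hm
  have hm0 : 0 ≤ m := Int.emod_nonneg _ (by linarith)
  have hmlt : m < N1 := Int.emod_lt_of_pos _ hN1
  have h3 : N1 ∣ k * b - m := Int.dvd_self_sub_of_emod_eq rfl
  obtain ⟨c, hc⟩ := h3
  obtain ⟨d, hd⟩ : N1 ∣ m * N2 - k := ⟨-c * N2 - k * a, by linear_combination (-N2) * hc + k * hab⟩
  have hd0 : -N2 ≤ d := by nlinarith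
  have hd1 : d ≤ N2 - 1 := by nlinarith
  rcases le_or_gt 0 d with h | h
  · exact ⟨m, d, hm0, by linarith, h, hd1, by linarith⟩
  · exact ⟨m + N1, d + N2, by linarith, by linarith, by linarith, by linarith,
      by linear_combination -hd⟩

/-- For coprime positive integers `N1 < N2`, the difference set of the co-prime array
`S_CP = {n1·N2 : 0 ≤ n1 ≤ 2N1 - 1} ∪ {n2·N1 : 0 ≤ n2 ≤ N2 - 1}` contains all
contiguous integers from `-N1·N2` to `N1·N2`. -/
theorem stmt_14 (N1 N2 : ℤ) (h1 : 1 ≤ N1) (hlt : N1 < N2) (hcop : IsCoprime N1 N2) :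
    let S : Set ℤ := {x | ∃ n1 : ℤ, 0 ≤ n1 ∧ n1 ≤ 2 * N1 - 1 ∧ x = n1 * N2}
      ∪ {x | ∃ n2 : ℤ, 0 ≤ n2 ∧ n2 ≤ N2 - 1 ∧ x = n2 * N1}
    {k : ℤ | -(N1 * N2) ≤ k ∧ k ≤ N1 * N2} ⊆ {d : ℤ | ∃ p ∈ S, ∃ q ∈ S, d = p - q} := by
  intro S k ⟨hk0, hk1⟩
  rcases le_or_gt 0 k with h | h
  · obtain ⟨n1, n2, ha, hb, hc, hd, he⟩ := stmt_14_aux N1 N2 h1 hlt hcop k h hk1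
    exact ⟨n1 * N2, Or.inl ⟨n1, ha, hb, rfl⟩, n2 * N1, Or.inr ⟨n2, hc, hd, rfl⟩, he⟩
  · obtain ⟨n1, n2, ha, hb, hc, hd, he⟩ := stmt_14_aux N1 N2 h1 hlt hcop (-k) (by linarith) (by linarith)
    exact ⟨n2 * N1, Or.inr ⟨n2, hc, hd, rfl⟩, n1 * N2, Or.inl ⟨n1, ha, hb, rfl⟩, by linarith⟩
end

section
/- For an integer P ≥ 2 that is not a perfect square and not prime, there exist exactly two optimal pairs (N1, N2) of positive integers minimizing N1 + N2 subject to N2(N1+1) = P, namely (d*−1, P/d*) and (P/d* − 1, d*), where d* = max{d : d | P, d ≤ √P}; these two pairs are distinct and achieve the same sum d* + P/d* − 1. -/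
lemma key19 (d c e f : ℕ) (he : 0 < e) (hef : e * f = d * c)
    (hed : e ≤ d) (hec : e ≤ c) (hdc : d < c) :
    d + c ≤ e + f ∧ (d + c = e + f → e = d ∧ f = c) := by
  obtain ⟨a, rfl⟩ := Nat.exists_eq_add_of_le hed
  obtain ⟨b, rfl⟩ := Nat.exists_eq_add_of_le hec
  have hmul : e * (e + a + b) ≤ e * f := by nlinarith
  have hle : e + a + b ≤ f := Nat.le_of_mul_le_mul_left hmul he
  refine ⟨by omega, ?_⟩
  intro hsum
  have hf : f = e + a + b := by omega
  subst hf
  have hab : a * b = 0 := by nlinarith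
  have ha : a = 0 := by
    rcases Nat.mul_eq_zero.mp hab with h | h
    · exact h
    · omega
  subst ha
  exact ⟨by omega, by omega⟩

/-- For a composite non-square `P ≥ 2`, there are exactly two optimal pairs `(N1, N2)`
of positive integers minimizing `N1 + N2` subject to `N2(N1+1) = P`, namely
`(d* - 1, P/d*)` and `(P/d* - 1, d*)` with `d*` the largest divisor of `P` with
`1 < d*` and `d*² ≤ P`; they are distinct and achieve the same sum `d* + P/d* - 1`. -/
theorem stmt_19 (P d : ℕ) (hP : 2 ≤ P) (hnp : ¬ P.Prime) (hns : ¬ ∃ s : ℕ, s * s = P)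
    (hdvd : d ∣ P) (hd1 : 1 < d) (hdsq : d * d ≤ P)
    (hmax : ∀ e : ℕ, e ∣ P → 1 < e → e * e ≤ P → e ≤ d) :
    -- both pairs are feasible
    (0 < d - 1 ∧ 0 < P / d ∧ (P / d) * ((d - 1) + 1) = P) ∧
    (0 < P / d - 1 ∧ 0 < d ∧ d * ((P / d - 1) + 1) = P) ∧
    -- they are distinct and have the same sum d* + P/d* - 1
    ((d - 1, P / d) ≠ (P / d - 1, d)) ∧
    ((d - 1) + P / d = d + P / d - 1 ∧ (P / d - 1) + d = d + P / d - 1) ∧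
    -- the common sum is minimal, and any minimizer is one of the two pairs
    (∀ N1 N2 : ℕ, 0 < N1 → 0 < N2 → N2 * (N1 + 1) = P →
      d + P / d - 1 ≤ N1 + N2 ∧
      (N1 + N2 = d + P / d - 1 →
        ((N1, N2) = (d - 1, P / d) ∨ (N1, N2) = (P / d - 1, d)))) := by
  have hdc : d * (P / d) = P := Nat.mul_div_cancel' hdvd
  set c := P / d with hcdef
  have hd0 : 0 < d := by omega
  have hdlt : d < c := by
    have hne : d * d ≠ P := fun h => hns ⟨d, h⟩
    have h2 : d * d < d * c := by omega
    exact lt_of_mul_lt_mul_left h2 (le_of_lt hd0)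
  have hd1' : (d - 1) + 1 = d := by omega
  have hc1' : (c - 1) + 1 = c := by omega
  refine ⟨⟨by omega, by omega, by rw [hd1', Nat.mul_comm]; exact hdc⟩,
    ⟨by omega, hd0, by rw [hc1']; exact hdc⟩,
    ?_, ⟨by omega, by omega⟩, ?_⟩
  · simp only [ne_eq, Prod.mk.injEq, not_and]
    intro _ h
    omega
  · intro N1 N2 h1 h2 h3
    -- a = N1 + 1, b = N2, b * a = P
    have hsum : d + c ≤ N2 + (N1 + 1) ∧
        (d + c = N2 + (N1 + 1) → ((N1, N2) = (d - 1, c) ∨ (N1, N2) = (c - 1, d))) := by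
      rcases le_or_gt N2 (N1 + 1) with hba | hba
      · -- e = N2
        have heP : N2 * N2 ≤ P := by
          calc N2 * N2 ≤ N2 * (N1 + 1) := Nat.mul_le_mul_left N2 hba
          _ = P := h3
        have hed : N2 ≤ d := by
          rcases Nat.lt_or_ge N2 2 with h | h
          · omega
          · exact hmax N2 ⟨N1 + 1, h3.symm⟩ h heP
        have hec : N2 ≤ c := by nlinarith
        have hef : N2 * (N1 + 1) = d * c := by rw [h3, hdc]
        obtain ⟨hle, heq⟩ := key19 d c N2 (N1 + 1) h2 hef hed hec hdlt
        refine ⟨by omega, fun hs => ?_⟩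
        obtain ⟨he1, he2⟩ := heq (by omega)
        right
        simp only [Prod.mk.injEq]
        omega
      · -- e = N1 + 1
        have heP : (N1 + 1) * (N1 + 1) ≤ P := by
          calc (N1 + 1) * (N1 + 1) ≤ (N1 + 1) * N2 := Nat.mul_le_mul_left _ (by omega)
          _ = P := by rw [Nat.mul_comm]; exact h3
        have hed : N1 + 1 ≤ d :=
          hmax (N1 + 1) ⟨N2, by rw [Nat.mul_comm]; exact h3.symm⟩ (by omega) heP
        have hec : N1 + 1 ≤ c := by nlinarith
        have hef : (N1 + 1) * N2 = d * c := by rw [Nat.mul_comm, h3, hdc]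
        obtain ⟨hle, heq⟩ := key19 d c (N1 + 1) N2 (by omega) hef hed hec hdlt
        refine ⟨by omega, fun hs => ?_⟩
        obtain ⟨he1, he2⟩ := heq (by omega)
        left
        simp only [Prod.mk.injEq]
        omega
    exact ⟨by omega, fun hs => hsum.2 (by omega)⟩
end
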